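/- Let c: X × U → ℝ be measurable and bounded, Q a stochastic kernel from X to Y, and Γ the set of measurable functions γ: Y → U. Define J*(P,Q) = inf_{γ ∈ Γ} ∫∫ c(x, γ(y)) Q(dy|x) P(dx). Then for all probability measures P, P' on X, |J*(P,Q) − J*(P',Q)| ≤ ‖c‖_∞ · ‖P − P'‖_TV. In particular J*(·,Q) is continuous in total variation. -/

import Mathlib

/-! For a fixed measurable policy `γ`, the cost under `P` is `∫ g dP` with
`g x = ∫ c(x, γ y) Q(dy|x)`, and `|g| ≤ M`. On a Hahn set `s` for `P - P'`, the nonnegative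
functions `M - g` and `g + M` have larger integrals under `P` on `s` and under `P'` on `sᶜ`, which
gives `∫ g dP - ∫ g dP' ≤ 2M (P s - P' s) ≤ M ‖P - P'‖_TV`. A uniform bound on the difference
of two families of costs passes to their infima. -/

open MeasureTheory ProbabilityTheory Filter

/-- Total variation distance (factor-2 convention). -/
noncomputable def tvDist {α : Type*} [MeasurableSpace α] (μ ν : Measure α) : ℝ :=
  2 * ⨆ B : {B : Set α // MeasurableSet B}, |(μ B.1).toReal - (ν B.1).toReal|

/-- The single-stage optimal cost `J*(P,Q) = inf_{γ measurable} ∫∫ c(x,γ(y)) Q(dy|x) P(dx)`. -/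
noncomputable def Jstar {X Y U : Type*} [MeasurableSpace X] [MeasurableSpace Y]
    [MeasurableSpace U] (c : X → U → ℝ) (Q : Kernel X Y) (P : Measure X) : ℝ :=
  ⨅ γ : {γ : Y → U // Measurable γ}, ∫ p, c p.1 (γ.1 p.2) ∂(P ⊗ₘ Q)
section TotalVariation

variable {α : Type*} [MeasurableSpace α] {μ ν : Measure α}

lemma bddAbove_range_abs_measureReal_sub [IsFiniteMeasure μ] [IsFiniteMeasure ν] :
    BddAbove (Set.range fun s : {s : Set α // MeasurableSet s} =>
      |(μ s.1).toReal - (ν s.1).toReal|) := by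
  refine ⟨μ.real Set.univ + ν.real Set.univ, ?_⟩
  rintro _ ⟨s, rfl⟩
  have hμ := measureReal_mono (μ := μ) (Set.subset_univ s.1)
  have hν := measureReal_mono (μ := ν) (Set.subset_univ s.1)
  simp only [← measureReal_def, abs_le]
  constructor <;> linarith [measureReal_nonneg (μ := μ) (s := s.1),
    measureReal_nonneg (μ := ν) (s := s.1)]

lemma two_mul_abs_measureReal_sub_le_tvDist [IsFiniteMeasure μ] [IsFiniteMeasure ν]
    {s : Set α} (hs : MeasurableSet s) : 2 * |μ.real s - ν.real s| ≤ tvDist μ ν :=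
  mul_le_mul_of_nonneg_left (le_ciSup bddAbove_range_abs_measureReal_sub ⟨s, hs⟩) zero_le_two

lemma tvDist_comm (μ ν : Measure α) : tvDist μ ν = tvDist ν μ := by
  simp only [tvDist, abs_sub_comm]

lemma integrable_of_forall_abs_le [IsFiniteMeasure μ] {g : α → ℝ} (hg : Measurable g) {M : ℝ}
    (hgM : ∀ x, |g x| ≤ M) : Integrable g μ :=
  .of_bound hg.aestronglyMeasurable M
    (ae_of_all _ fun x => (Real.norm_eq_abs _).trans_le (hgM x))

lemma abs_integral_le_of_forall_abs_le [IsProbabilityMeasure μ] {g : α → ℝ} {M : ℝ}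
    (hgM : ∀ x, |g x| ≤ M) : |∫ x, g x ∂μ| ≤ M := by
  simpa using norm_integral_le_of_norm_le_const (μ := μ)
    (ae_of_all _ fun x => (Real.norm_eq_abs _).trans_le (hgM x))

lemma MeasureTheory.IsHahnDecomposition.integral_sub_integral_le [IsFiniteMeasure μ]
    [IsFiniteMeasure ν] {s : Set α} (hs : IsHahnDecomposition ν μ s) {g : α → ℝ}
    (hg : Measurable g) {M : ℝ} (hgM : ∀ x, |g x| ≤ M) :
    ∫ x, g x ∂μ - ∫ x, g x ∂ν ≤ M * (μ.real s - ν.real s + (ν.real sᶜ - μ.real sᶜ)) := by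
  have hμ : Integrable g μ := integrable_of_forall_abs_le hg hgM
  have hν : Integrable g ν := integrable_of_forall_abs_le hg hgM
  have hs_le : ∫ x in s, M - g x ∂ν ≤ ∫ x in s, M - g x ∂μ :=
    integral_mono_measure hs.le_on (ae_of_all _ fun x => sub_nonneg.2 (le_of_abs_le (hgM x)))
      ((integrable_const M).sub hμ).restrict
  have hsc_le : ∫ x in sᶜ, g x + M ∂μ ≤ ∫ x in sᶜ, g x + M ∂ν :=
    integral_mono_measure hs.ge_on_compl
      (ae_of_all _ fun x => neg_le_iff_add_nonneg.1 (neg_le_of_abs_le (hgM x)))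
      (hν.add (integrable_const M)).restrict
  rw [integral_sub (integrable_const M) hμ.restrict,
    integral_sub (integrable_const M) hν.restrict] at hs_le
  rw [integral_add hμ.restrict (integrable_const M),
    integral_add hν.restrict (integrable_const M)] at hsc_le
  simp only [setIntegral_const, smul_eq_mul] at hs_le hsc_le
  rw [← integral_add_compl hs.measurableSet hμ,
    ← integral_add_compl hs.measurableSet hν]
  linarith

lemma integral_sub_integral_le_mul_tvDist [IsProbabilityMeasure μ] [IsProbabilityMeasure ν]
    {g : α → ℝ} (hg : Measurable g) {M : ℝ} (hgM : ∀ x, |g x| ≤ M) :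
    ∫ x, g x ∂μ - ∫ x, g x ∂ν ≤ M * tvDist μ ν := by
  obtain ⟨s, hs⟩ := exists_isHahnDecomposition ν μ
  have hM : 0 ≤ M := (abs_nonneg _).trans (hgM (nonempty_of_isProbabilityMeasure μ).some)
  have hdiff : 2 * (μ.real s - ν.real s) ≤ tvDist μ ν :=
    (mul_le_mul_of_nonneg_left (le_abs_self _) zero_le_two).trans
      (two_mul_abs_measureReal_sub_le_tvDist hs.measurableSet)
  calc ∫ x, g x ∂μ - ∫ x, g x ∂ν
      ≤ M * (μ.real s - ν.real s + (ν.real sᶜ - μ.real sᶜ)) :=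
        hs.integral_sub_integral_le hg hgM
    _ = M * (2 * (μ.real s - ν.real s)) := by
      rw [probReal_compl_eq_one_sub hs.measurableSet, probReal_compl_eq_one_sub hs.measurableSet]
      ring
    _ ≤ M * tvDist μ ν := mul_le_mul_of_nonneg_left hdiff hM

lemma abs_integral_sub_integral_le_mul_tvDist [IsProbabilityMeasure μ] [IsProbabilityMeasure ν]
    {g : α → ℝ} (hg : Measurable g) {M : ℝ} (hgM : ∀ x, |g x| ≤ M) :
    |∫ x, g x ∂μ - ∫ x, g x ∂ν| ≤ M * tvDist μ ν :=
  abs_sub_le_iff.2 ⟨integral_sub_integral_le_mul_tvDist hg hgM,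
    tvDist_comm μ ν ▸ integral_sub_integral_le_mul_tvDist hg hgM⟩

lemma abs_integral_compProd_sub_le_mul_tvDist {β : Type*} [MeasurableSpace β] (κ : Kernel α β)
    [IsMarkovKernel κ] [IsProbabilityMeasure μ] [IsProbabilityMeasure ν] {f : α × β → ℝ}
    (hf : Measurable f) {M : ℝ} (hfM : ∀ p, |f p| ≤ M) :
    |∫ p, f p ∂(μ ⊗ₘ κ) - ∫ p, f p ∂(ν ⊗ₘ κ)| ≤ M * tvDist μ ν := by
  rw [Measure.integral_compProd (integrable_of_forall_abs_le hf hfM),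
    Measure.integral_compProd (integrable_of_forall_abs_le hf hfM)]
  exact abs_integral_sub_integral_le_mul_tvDist
    hf.stronglyMeasurable.integral_kernel_prod_right'.measurable
    fun x => abs_integral_le_of_forall_abs_le fun y => hfM (x, y)

end TotalVariation

lemma ciInf_le_ciInf_add {ι : Sort*} [Nonempty ι] {f g : ι → ℝ} (hf : BddBelow (Set.range f))
    {C : ℝ} (h : ∀ i, f i ≤ g i + C) : ⨅ i, f i ≤ (⨅ i, g i) + C :=
  sub_le_iff_le_add.1 <| le_ciInf fun i => sub_le_iff_le_add.2 ((ciInf_le hf i).trans (h i))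

lemma abs_ciInf_sub_ciInf_le {ι : Sort*} [Nonempty ι] {f g : ι → ℝ}
    (hf : BddBelow (Set.range f)) (hg : BddBelow (Set.range g)) {C : ℝ}
    (h : ∀ i, |f i - g i| ≤ C) : |(⨅ i, f i) - ⨅ i, g i| ≤ C :=
  abs_sub_le_iff.2
    ⟨sub_le_iff_le_add'.2 (ciInf_le_ciInf_add hf fun i => by linarith [abs_sub_le_iff.1 (h i)]),
      sub_le_iff_le_add'.2 (ciInf_le_ciInf_add hg fun i => by linarith [abs_sub_le_iff.1 (h i)])⟩

theorem Jstar_tv_continuous_general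
    {X Y U : Type*} [MeasurableSpace X] [MeasurableSpace Y] [MeasurableSpace U] [Nonempty U]
    (c : X → U → ℝ) (hc : Measurable (Function.uncurry c))
    (M : ℝ) (hcM : ∀ x u, |c x u| ≤ M)
    (Q : Kernel X Y) [IsMarkovKernel Q]
    (P P' : Measure X) [IsProbabilityMeasure P] [IsProbabilityMeasure P'] :
    |Jstar c Q P - Jstar c Q P'| ≤ M * tvDist P P' := by
  have : Nonempty {γ : Y → U // Measurable γ} :=
    ⟨⟨fun _ => Classical.arbitrary U, measurable_const⟩⟩
  have hbdd (R : Measure X) [IsProbabilityMeasure R] : BddBelow (Set.range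
      fun γ : {γ : Y → U // Measurable γ} => ∫ p, c p.1 (γ.1 p.2) ∂(R ⊗ₘ Q)) :=
    ⟨-M, by
      rintro _ ⟨γ, rfl⟩
      exact neg_le_of_abs_le (abs_integral_le_of_forall_abs_le fun p => hcM _ _)⟩
  exact abs_ciInf_sub_ciInf_le (hbdd P) (hbdd P') fun γ =>
    abs_integral_compProd_sub_le_mul_tvDist Q
      (hc.comp (measurable_fst.prodMk (γ.2.comp measurable_snd))) fun p => hcM _ _

/-- For bounded measurable nonnegative cost, the single-stage optimal cost is Lipschitz in the
prior for the total variation distance: `|J*(P,Q) − J*(P',Q)| ≤ ‖c‖_∞ ‖P − P'‖_TV`. -/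
theorem Jstar_tv_continuous
    {X Y U : Type*} [MeasurableSpace X] [MeasurableSpace Y] [MeasurableSpace U] [Nonempty U]
    (c : X → U → ℝ) (hc : Measurable (Function.uncurry c))
    (hc0 : ∀ x u, 0 ≤ c x u) (M : ℝ) (hcM : ∀ x u, |c x u| ≤ M)
    (Q : Kernel X Y) [IsMarkovKernel Q]
    (P P' : Measure X) [IsProbabilityMeasure P] [IsProbabilityMeasure P'] :
    |Jstar c Q P - Jstar c Q P'| ≤ M * tvDist P P' :=
  Jstar_tv_continuous_general c hc M hcM Q P P'
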